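/- arXiv:2605.25035 — 2 statements merged into one kernel-verified Lean document; each statement's English description precedes it below -/
import Mathlib

section
/- The 4-sphere is homeomorphic to the quaternionic projective line: the unit sphere in the 5-dimensional Euclidean space EuclideanSpace ℝ (Fin 5) is homeomorphic to the projectivization ℙ(ℍ²) of the 2-dimensional quaternionic module ℍ² over the division ring ℍ of real quaternions. -/
/-!
STATEMENT 0: The 4-sphere is homeomorphic to the quaternionic projective line:
the unit sphere in `EuclideanSpace ℝ (Fin 5)` is homeomorphic to the projectivization
`ℙ ℍ ℍ²` of the 2-dimensional quaternionic module `ℍ²` (with the L² norm) over the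
division ring `ℍ` of real quaternions.
-/

open scoped LinearAlgebra.Projectivization

noncomputable section

local notation "ℍ" => Quaternion ℝ

/-- `ℍ²`: the product `ℍ × ℍ` with the L² (Euclidean) norm, a left `ℍ`-module. -/
abbrev H2 : Type := WithLp 2 (ℍ × ℍ)

/-- The quotient topology on the projectivization `ℙ ℍ ℍ²`. -/
instance : TopologicalSpace (ℙ ℍ H2) :=
  inferInstanceAs (TopologicalSpace (Quotient (projectivizationSetoid ℍ H2)))


/-
The map `[a : b] ↦ ((‖a‖² - ‖b‖², 2 a⋆b) / (‖a‖² + ‖b‖²))` from `ℙ(ℍ²)` to the unit sphere of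
`ℝ × ℍ ≅ ℝ⁵` (the base of the quaternionic Hopf fibration) is well defined because replacing
`(a, b)` by `(c a, c b)` multiplies numerator and denominator by `‖c‖²`. It is a bijection whose
inverse sends `(t, q)` to `[1 + t : q]` away from the south pole `t = -1`, and the south pole to
`[0 : 1]`. Since `ℙ(ℍ²)` is compact, being the image of the unit sphere of `ℍ²`, this continuous
bijection onto a Hausdorff space is a homeomorphism.
-/

open Metric Projectivization

local notation "ℝ⊕ℍ" => WithLp 2 (ℝ × ℍ)

def LinearIsometryEquiv.sphereHomeomorph {R E F : Type*} [Semiring R]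
    [SeminormedAddCommGroup E] [SeminormedAddCommGroup F] [Module R E] [Module R F]
    (e : E ≃ₗᵢ[R] F) (r : ℝ) : sphere (0 : E) r ≃ₜ sphere (0 : F) r :=
  e.toHomeomorph.subtype fun x => by simp

lemma finrank_real_prod_quaternion : Module.finrank ℝ (ℝ⊕ℍ) = 5 := by
  rw [(WithLp.linearEquiv 2 ℝ (ℝ × ℍ)).finrank_eq, Module.finrank_prod, Module.finrank_self,
    Quaternion.finrank_eq_four]

def realProdQuaternionEquivEuclidean : ℝ⊕ℍ ≃ₗᵢ[ℝ] EuclideanSpace ℝ (Fin 5) :=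
  ((stdOrthonormalBasis ℝ (ℝ⊕ℍ)).reindex (finCongr finrank_real_prod_quaternion)).repr

lemma star_mul_self_eq_sq_norm (a : ℍ) : star a * a = ((‖a‖ ^ 2 : ℝ) : ℍ) := by
  rw [Quaternion.star_mul_self, Quaternion.normSq_eq_norm_mul_self, sq]

lemma sq_norm_fst_add_sq_norm_snd_pos {v : H2} (hv : v ≠ 0) : 0 < ‖v.fst‖ ^ 2 + ‖v.snd‖ ^ 2 := by
  rw [← WithLp.prod_norm_sq_eq_of_L2]
  exact pow_pos (norm_pos_iff.mpr hv) 2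

def hopf (v : H2) : ℝ⊕ℍ :=
  WithLp.toLp 2 ((‖v.fst‖ ^ 2 - ‖v.snd‖ ^ 2) / (‖v.fst‖ ^ 2 + ‖v.snd‖ ^ 2),
    (2 / (‖v.fst‖ ^ 2 + ‖v.snd‖ ^ 2)) • (star v.fst * v.snd))

lemma norm_hopf {v : H2} (hv : v ≠ 0) : ‖hopf v‖ = 1 := by
  have hN := (sq_norm_fst_add_sq_norm_snd_pos hv).ne'
  have hsq : ‖hopf v‖ ^ 2 = 1 := by
    rw [WithLp.prod_norm_sq_eq_of_L2]
    simp only [hopf, WithLp.toLp_fst, WithLp.toLp_snd, norm_smul, norm_mul, Quaternion.norm_star,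
      Real.norm_eq_abs, abs_div, sq_abs, mul_pow, div_pow]
    field_simp
    ring
  exact (pow_eq_one_iff_of_nonneg (norm_nonneg _) two_ne_zero).mp hsq

lemma hopf_smul {c : ℍ} (hc : c ≠ 0) (v : H2) : hopf (c • v) = hopf v := by
  have hc2 : ‖c‖ ^ 2 ≠ 0 := by positivity
  have hstar : star (c * v.fst) * (c * v.snd) = (‖c‖ ^ 2 : ℝ) • (star v.fst * v.snd) := by
    rw [star_mul, mul_assoc, ← mul_assoc (star c), star_mul_self_eq_sq_norm,
      Quaternion.coe_mul_eq_smul, mul_smul_comm]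
  simp only [hopf, WithLp.smul_fst, WithLp.smul_snd, smul_eq_mul, hstar, norm_mul, mul_pow,
    ← mul_sub, ← mul_add, smul_smul, mul_div_mul_left _ _ hc2]
  congr 3
  field_simp

lemma one_add_hopf_fst {v : H2} (hv : v ≠ 0) :
    1 + (hopf v).fst = 2 * ‖v.fst‖ ^ 2 / (‖v.fst‖ ^ 2 + ‖v.snd‖ ^ 2) := by
  have hN := (sq_norm_fst_add_sq_norm_snd_pos hv).ne'
  simp only [hopf, WithLp.toLp_fst]
  field_simp
  ring

lemma hopf_fst_eq_neg_one_iff {v : H2} (hv : v ≠ 0) : (hopf v).fst = -1 ↔ v.fst = 0 := by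
  rw [← add_eq_zero_iff_eq_neg', one_add_hopf_fst hv,
    div_eq_zero_iff, or_iff_left (sq_norm_fst_add_sq_norm_snd_pos hv).ne']
  simp

def hopfMap : ℙ ℍ H2 → sphere (0 : ℝ⊕ℍ) 1 :=
  Projectivization.lift (fun v => ⟨hopf v, by simpa using norm_hopf v.2⟩)
    (by
      rintro v w c hvw
      have hc : c ≠ 0 := by rintro rfl; exact v.2 (by simpa using hvw)
      ext1
      simp only [hvw, hopf_smul hc])

lemma hopfMap_mk (v : H2) (hv : v ≠ 0) : (hopfMap (mk ℍ v hv) : ℝ⊕ℍ) = hopf v := rfl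

lemma continuous_hopfMap : Continuous hopfMap := by
  refine continuous_quot_lift _ (Continuous.subtype_mk ?_ _)
  have hN : ∀ v : {v : H2 // v ≠ 0}, ‖v.1.fst‖ ^ 2 + ‖v.1.snd‖ ^ 2 ≠ 0 :=
    fun v => (sq_norm_fst_add_sq_norm_snd_pos v.2).ne'
  unfold hopf
  fun_prop (disch := exact hN _)

lemma sq_fst_add_sq_norm_snd (x : sphere (0 : ℝ⊕ℍ) 1) : x.1.fst ^ 2 + ‖x.1.snd‖ ^ 2 = 1 := by
  have h := WithLp.prod_norm_sq_eq_of_L2 x.1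
  rwa [mem_sphere_zero_iff_norm.mp x.2, one_pow, Real.norm_eq_abs, sq_abs, eq_comm] at h

def hopfInv (x : sphere (0 : ℝ⊕ℍ) 1) : ℙ ℍ H2 :=
  if h : x.1.fst = -1 then mk ℍ (WithLp.toLp 2 (0, 1)) (by simp)
  else mk ℍ (WithLp.toLp 2 (((1 + x.1.fst : ℝ) : ℍ), x.1.snd))
    (by
      have h1 : ((1 + x.1.fst : ℝ) : ℍ) ≠ 0 :=
        (map_ne_zero (algebraMap ℝ ℍ)).mpr fun h' : 1 + x.1.fst = 0 => h (by linarith)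
      exact fun h0 => h1 (congrArg Prod.fst ((WithLp.toLp_eq_zero 2).1 h0)))

lemma hopfInv_hopfMap (p : ℙ ℍ H2) : hopfInv (hopfMap p) = p := by
  induction p using Projectivization.ind with | h v hv =>
  obtain ⟨a, b⟩ := v
  unfold hopfInv
  split_ifs with h
  · rw [hopfMap_mk, hopf_fst_eq_neg_one_iff hv] at h
    simp only [WithLp.toLp_fst] at h
    have hb : b ≠ 0 := by simpa [h] using hv
    rw [mk_eq_mk_iff']
    exact ⟨b⁻¹, by simp [← WithLp.toLp_smul, h, hb]⟩
  · -- `(1 + t, q) = (2 / (‖a‖² + ‖b‖²)) a⋆ • (a, b)` for `(t, q) = hopf (a, b)`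
    rw [mk_eq_mk_iff']
    refine ⟨(2 / (‖a‖ ^ 2 + ‖b‖ ^ 2) : ℝ) • star a, ?_⟩
    rw [hopfMap_mk, one_add_hopf_fst hv]
    simp only [← WithLp.toLp_smul, Prod.smul_mk, smul_eq_mul, smul_mul_assoc,
      star_mul_self_eq_sq_norm, hopf, WithLp.toLp_fst, WithLp.toLp_snd, ← Quaternion.coe_smul,
      div_mul_eq_mul_div]

lemma hopfMap_hopfInv (x : sphere (0 : ℝ⊕ℍ) 1) : hopfMap (hopfInv x) = x := by
  obtain ⟨⟨t, q⟩, hmem⟩ := x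
  have hx := sq_fst_add_sq_norm_snd ⟨_, hmem⟩
  simp only [WithLp.toLp_fst, WithLp.toLp_snd] at hx
  ext1
  unfold hopfInv
  split_ifs with ht
  · simp only [WithLp.toLp_fst] at ht
    have hq : q = 0 := by simpa [ht] using hx
    simp [hopfMap_mk, hopf, ht, hq]
  · simp only [WithLp.toLp_fst] at ht
    have ht' : 1 + t ≠ 0 := fun h => ht (by linarith)
    have hN : (1 + t) ^ 2 + ‖q‖ ^ 2 = 2 * (1 + t) := by linarith
    simp only [hopfMap_mk, hopf, WithLp.toLp_fst, WithLp.toLp_snd, Quaternion.norm_coe,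
      Real.norm_eq_abs, sq_abs, hN, Quaternion.star_coe, Quaternion.coe_mul_eq_smul, smul_smul]
    congr 2
    · field_simp
      linarith
    · field_simp
      exact one_smul ℝ q

lemma mk_surjective_unitSphere :
    Function.Surjective fun x : sphere (0 : H2) 1 => mk ℍ x.1 (ne_zero_of_mem_unit_sphere x) := by
  intro p
  induction p using Projectivization.ind with | h v hv =>
  refine ⟨⟨(‖v‖⁻¹ : ℝ) • v, by simp [norm_smul, hv]⟩, ?_⟩
  exact (mk_eq_mk_iff' ..).mpr ⟨algebraMap ℝ ℍ ‖v‖⁻¹, algebraMap_smul ℍ _ v⟩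

instance : CompactSpace (ℙ ℍ H2) :=
  mk_surjective_unitSphere.compactSpace
    (continuous_quot_mk.comp (continuous_subtype_val.subtype_mk _))

def hopfHomeomorph : ℙ ℍ H2 ≃ₜ sphere (0 : ℝ⊕ℍ) 1 :=
  Continuous.homeoOfEquivCompactToT2 (f := ⟨hopfMap, hopfInv, hopfInv_hopfMap, hopfMap_hopfInv⟩)
    continuous_hopfMap

theorem sphere4_homeomorph_quaternionic_projective_line :
    Nonempty ((Metric.sphere (0 : EuclideanSpace ℝ (Fin 5)) 1) ≃ₜ ℙ ℍ H2) :=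
  ⟨(hopfHomeomorph.trans (realProdQuaternionEquivEuclidean.sphereHomeomorph 1)).symm⟩
end
end

section
/- For natural numbers k and n with 1 ≤ k < n, the k-th homotopy group π_k(Sⁿ) of the n-sphere (based at any point) is trivial. -/
/-!
Deform a based map `f : Iᵏ → Sⁿ`, relative to the boundary of the cube, so that near the
antipode `-x` of the base point it becomes the radial projection of a `C¹` approximation
`G : ℝᵏ → ℝⁿ⁺¹` of `f`. The cone `ℝ • range G` is the image of a `C¹` map on `ℝᵏ⁺¹`, so for
`k < n` its complement is dense, and a point `q` near `-x` off this cone is not hit by the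
deformed map. Stereographic projection from `q` identifies `Sⁿ \ {q}` with a vector space, in
which the straight-line homotopy to the base point is stationary on the boundary.
-/

open scoped Topology Manifold

open Metric Set Module unitInterval Topology.Homotopy

theorem exists_contDiff_dist_lt {F E : Type*} [NormedAddCommGroup F] [NormedSpace ℝ F]
    [FiniteDimensional ℝ F] [NormedAddCommGroup E] [NormedSpace ℝ E] (n : ℕ∞)
    {f : F → E} (hf : Continuous f) {ε : ℝ} (hε : 0 < ε) :
    ∃ g : F → E, ContDiff ℝ n g ∧ ∀ y, dist (g y) (f y) < ε := by
  obtain ⟨g, hg⟩ := exists_contMDiffMap_forall_mem_convex_of_local_const 𝓘(ℝ, F)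
    (t := fun y => ball (f y) ε) (n := n) (fun y => convex_ball _ _) fun y =>
      ⟨f y, (hf.continuousAt.eventually (ball_mem_nhds _ hε)).mono fun _ => mem_ball_comm.1⟩
  exact ⟨g, contMDiff_iff_contDiff.1 g.contMDiff, hg⟩

theorem dense_compl_range_smul {F E : Type*} [NormedAddCommGroup F] [NormedSpace ℝ F]
    [FiniteDimensional ℝ F] [NormedAddCommGroup E] [NormedSpace ℝ E] [FiniteDimensional ℝ E]
    {g : F → E} (hg : ContDiff ℝ 1 g) (hFE : finrank ℝ F + 1 < finrank ℝ E) :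
    Dense (range fun p : ℝ × F => p.1 • g p.2)ᶜ :=
  ContDiff.dense_compl_range_of_finrank_lt_finrank (by fun_prop)
    (by rwa [finrank_prod, finrank_self, add_comm])

theorem OpenPartialHomeomorph.homotopicRel_const_of_convex_target {Y F Z : Type*}
    [TopologicalSpace Y] [TopologicalSpace Z] [AddCommGroup F] [Module ℝ F] [TopologicalSpace F]
    [ContinuousAdd F] [ContinuousSMul ℝ F] (e : OpenPartialHomeomorph Y F)
    (he : Convex ℝ e.target) {g : C(Z, Y)} (hg : ∀ z, g z ∈ e.source) {y : Y}
    (hy : y ∈ e.source) {S : Set Z} (hS : ∀ z ∈ S, g z = y) :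
    g.HomotopicRel (ContinuousMap.const Z y) S := by
  set c : I × Z → F := fun p => (1 - (p.1 : ℝ)) • e (g p.2) + (p.1 : ℝ) • e y
  have hc : ∀ p, c p ∈ e.target := fun p => he (e.map_source (hg p.2)) (e.map_source hy)
    (sub_nonneg.2 p.1.2.2) p.1.2.1 (sub_add_cancel _ _)
  have hc_cont : Continuous c :=
    ((continuous_const.sub (continuous_subtype_val.comp continuous_fst)).smul
      ((e.continuousOn.comp_continuous g.continuous hg).comp continuous_snd)).add
      ((continuous_subtype_val.comp continuous_fst).smul continuous_const)
  refine ⟨⟨⟨⟨fun p => e.symm (c p), e.continuousOn_symm.comp_continuous hc_cont hc⟩,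
    fun z => ?_, fun z => ?_⟩, fun s z hz => ?_⟩⟩
  · simp [c, e.left_inv (hg z)]
  · simp [c, e.left_inv hy]
  · simp [c, hS z hz, ← add_smul, e.left_inv hy]

section SphereMaps

variable {E : Type*} [NormedAddCommGroup E] [NormedSpace ℝ E]

theorem norm_inv_norm_smul_of_ne_zero {w : E} (hw : w ≠ 0) : ‖‖w‖⁻¹ • w‖ = 1 := by
  simp [norm_smul, hw]

theorem dist_neg_self_of_norm_eq_one {x : E} (hx : ‖x‖ = 1) : dist x (-x) = 2 := by
  rw [dist_eq_norm, sub_neg_eq_add, ← two_smul ℝ x, norm_smul, hx]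
  norm_num

theorem dist_inv_norm_smul_le {u : E} (hu : ‖u‖ = 1) (w : E) :
    dist (‖w‖⁻¹ • w) u ≤ 2 * dist w u := by
  have hw_u : ‖‖w‖⁻¹ • w - w‖ ≤ dist w u := by
    rcases eq_or_ne w 0 with rfl | hw
    · simp [hu]
    · calc ‖‖w‖⁻¹ • w - w‖ = |‖u‖ - ‖w‖| := by
            rw [hu, show ‖w‖⁻¹ • w - w = (‖w‖⁻¹ - 1) • w by rw [sub_smul, one_smul],
              norm_smul, Real.norm_eq_abs, ← abs_norm w, ← abs_mul, abs_norm, sub_mul,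
              inv_mul_cancel₀ (norm_ne_zero_iff.2 hw), one_mul]
        _ ≤ dist w u := by rw [dist_comm, dist_eq_norm]; exact abs_norm_sub_norm_le u w
  calc dist (‖w‖⁻¹ • w) u ≤ dist (‖w‖⁻¹ • w) w + dist w u := dist_triangle _ _ _
    _ ≤ 2 * dist w u := by rw [dist_eq_norm]; linarith

variable {X : Type*} [TopologicalSpace X]

noncomputable def normalizeToSphere (c : X → E) (hc : Continuous c) (h0 : ∀ t, c t ≠ 0) :
    C(X, sphere (0 : E) 1) :=
  ⟨fun t => ⟨‖c t‖⁻¹ • c t, mem_sphere_zero_iff_norm.2 (norm_inv_norm_smul_of_ne_zero (h0 t))⟩,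
    ((hc.norm.inv₀ fun t => norm_ne_zero_iff.2 (h0 t)).smul hc).subtype_mk _⟩

@[simp]
theorem coe_normalizeToSphere_apply (c : X → E) (hc : Continuous c) (h0 : ∀ t, c t ≠ 0)
    (t : X) : (normalizeToSphere c hc h0 t : E) = ‖c t‖⁻¹ • c t :=
  rfl

theorem homotopicRel_of_dist_lt_one {f g : C(X, sphere (0 : E) 1)}
    (hfg : ∀ t, dist (f t) (g t) < 1) {S : Set X} (hS : ∀ t ∈ S, f t = g t) :
    f.HomotopicRel g S := by
  set c : I × X → E := fun p => (f p.2 : E) + (p.1 : ℝ) • ((g p.2 : E) - f p.2)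
  have hc0 : ∀ p, c p ≠ 0 := by
    rintro ⟨s, t⟩ h
    have hs : ‖(s : ℝ) • ((g t : E) - f t)‖ < 1 := by
      rw [norm_smul, Real.norm_eq_abs, abs_of_nonneg s.2.1, ← dist_eq_norm, dist_comm]
      exact (mul_le_of_le_one_left dist_nonneg s.2.2).trans_lt (hfg t)
    have hft : (f t : E) = -((s : ℝ) • ((g t : E) - f t)) := eq_neg_of_add_eq_zero_left h
    rw [← norm_neg, ← hft, norm_eq_of_mem_sphere] at hs
    exact hs.false
  refine ⟨⟨⟨normalizeToSphere c (by fun_prop) hc0, fun t => ?_, fun t => ?_⟩,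
    fun s t ht => ?_⟩⟩ <;> ext1
  · simp [c]
  · simp [c]
  · simp [c, hS t ht]

theorem exists_homotopicRel_forall_ne {f : C(X, sphere (0 : E) 1)} {x : E} (hx : ‖x‖ = 1)
    {S : Set X} (hS : ∀ t ∈ S, (f t : E) = x) {G : X → E} (hG : Continuous G)
    (hGf : ∀ t, dist (G t) (f t) < 1 / 16) {q : E} (hq : dist q (-x) < 1 / 4)
    (hGq : ∀ t, ‖G t‖⁻¹ • G t ≠ q) :
    ∃ g : C(X, sphere (0 : E) 1), f.HomotopicRel g S ∧ ∀ t, (g t : E) ≠ q := by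
  obtain ⟨χ, hχ_far, hχ_near, hχ_mem⟩ := exists_continuous_zero_one_of_isClosed
    (s := (ball (-x) 1)ᶜ) (t := closedBall (-x) (1 / 2)) isOpen_ball.isClosed_compl
    isClosed_closedBall
    (disjoint_compl_left_iff_subset.2 (closedBall_subset_ball (by norm_num : (1 / 2 : ℝ) < 1)))
  set c : X → E := fun t => (f t : E) + χ (f t) • (G t - f t)
  have hcf : ∀ t, dist (c t) (f t) < 1 / 16 := fun t => by
    rw [dist_eq_norm, add_sub_cancel_left, norm_smul, Real.norm_eq_abs,
      abs_of_nonneg (hχ_mem _).1, ← dist_eq_norm]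
    exact (mul_le_of_le_one_left dist_nonneg (hχ_mem _).2).trans_lt (hGf t)
  have hc0 : ∀ t, c t ≠ 0 := fun t h => by
    have := hcf t
    rw [h, dist_comm, dist_zero_right, norm_eq_of_mem_sphere] at this
    norm_num at this
  set g := normalizeToSphere c (by fun_prop) hc0
  have hgf : ∀ t, dist (g t : E) (f t) ≤ 1 / 8 := fun t =>
    (dist_inv_norm_smul_le (norm_eq_of_mem_sphere (f t)) (c t)).trans (by linarith [hcf t])
  refine ⟨g, homotopicRel_of_dist_lt_one (fun t => ?_) fun t ht => ?_, fun t hgt => ?_⟩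
  · rw [dist_comm]
    exact (hgf t).trans_lt (by norm_num)
  · have hχ : χ (f t) = 0 := hχ_far (by simp [hS t ht, dist_neg_self_of_norm_eq_one hx])
    ext1
    simp [g, c, hχ]
  · by_cases hft : dist (f t : E) (-x) ≤ 1 / 2
    · have hct : c t = G t := by simp [c, hχ_near (mem_closedBall.2 hft)]
      exact hGq t (by rw [← hct, ← hgt]; rfl)
    · have : dist (f t : E) (-x) ≤ dist (g t : E) (f t) + dist q (-x) := by
        rw [← hgt, dist_comm (g t : E)]
        exact dist_triangle _ _ _
      linarith [hgf t]

end SphereMaps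

theorem exists_homotopicRel_forall_ne_of_cube {N E : Type*} [Fintype N] [NormedAddCommGroup E]
    [NormedSpace ℝ E] [FiniteDimensional ℝ E] (hN : Fintype.card N + 1 < finrank ℝ E)
    {f : C(I^N, sphere (0 : E) 1)} {x : sphere (0 : E) 1} {S : Set (I^N)}
    (hS : ∀ t ∈ S, f t = x) :
    ∃ g : C(I^N, sphere (0 : E) 1), f.HomotopicRel g S ∧ ∃ q, q ≠ x ∧ ∀ t, g t ≠ q := by
  set F : (N → ℝ) → E := fun y => f fun i => projIcc 0 1 zero_le_one (y i)
  obtain ⟨G, hG, hGF⟩ := exists_contDiff_dist_lt 1 (f := F) (by fun_prop)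
    (by norm_num : (0 : ℝ) < 1 / 16)
  obtain ⟨w, hw, hwG⟩ := (dense_compl_range_smul hG
    (by rwa [finrank_fintype_fun_eq_card])).inter_open_nonempty
    (ball (-(x : E)) (1 / 8)) isOpen_ball ⟨_, mem_ball_self (by norm_num)⟩
  have hx : ‖(x : E)‖ = 1 := norm_eq_of_mem_sphere x
  have hw0 : w ≠ 0 := by
    rintro rfl
    have := mem_ball.1 hw
    rw [dist_comm, dist_zero_right, norm_neg, hx] at this
    norm_num at this
  set q : sphere (0 : E) 1 :=
    ⟨‖w‖⁻¹ • w, mem_sphere_zero_iff_norm.2 (norm_inv_norm_smul_of_ne_zero hw0)⟩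
  have hq : dist (q : E) (-x) < 1 / 4 :=
    (dist_inv_norm_smul_le (by rw [norm_neg, hx]) w).trans_lt (by linarith [mem_ball.1 hw])
  have hGq : ∀ y, ‖G y‖⁻¹ • G y ≠ q := fun y h => hwG
    ⟨(‖w‖ * ‖G y‖⁻¹, y), by simp only [mul_smul, h, q, smul_inv_smul₀ (norm_ne_zero_iff.2 hw0)]⟩
  obtain ⟨g, hfg, hgq⟩ := exists_homotopicRel_forall_ne (G := fun t => G fun i => t i) hx
    (fun t ht => congrArg Subtype.val (hS t ht)) (by fun_prop)
    (fun t => by simpa [F] using hGF fun i => t i) hq fun t => hGq _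
  refine ⟨g, hfg, q, fun h => ?_, fun t h => hgq t (congrArg Subtype.val h)⟩
  rw [h, dist_neg_self_of_norm_eq_one hx] at hq
  norm_num at hq

theorem HomotopyGroup.subsingleton_of_forall_homotopic_const {N X : Type*} [TopologicalSpace X]
    {x : X} (h : ∀ p : Ω^ N X x, GenLoop.Homotopic p GenLoop.const) :
    Subsingleton (HomotopyGroup N X x) :=
  ⟨fun a b => Quotient.inductionOn₂ a b fun p q => Quotient.sound ((h p).trans (h q).symm)⟩

theorem pi_k_sphere_subsingleton_general (k n : ℕ) (hkn : k < n)
    (x : Metric.sphere (0 : EuclideanSpace ℝ (Fin (n + 1))) 1) :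
    Nonempty (π_ k (Metric.sphere (0 : EuclideanSpace ℝ (Fin (n + 1))) 1) x) ∧
    Subsingleton (π_ k (Metric.sphere (0 : EuclideanSpace ℝ (Fin (n + 1))) 1) x) := by
  refine ⟨inferInstance, HomotopyGroup.subsingleton_of_forall_homotopic_const fun p => ?_⟩
  obtain ⟨g, hpg, q, hqx, hgq⟩ :=
    exists_homotopicRel_forall_ne_of_cube (by simpa using hkn) (S := Cube.boundary (Fin k)) p.2
  have hg_boundary : ∀ t ∈ Cube.boundary (Fin k), g t = x := fun t ht =>
    (hpg.fst_eq_snd ht).symm.trans (p.2 t ht)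
  exact hpg.trans <| (stereographic (norm_eq_of_mem_sphere q)).homotopicRel_const_of_convex_target
    (by simp [convex_univ]) hgq hqx.symm hg_boundary

theorem pi_k_sphere_subsingleton (k n : ℕ) (hk : 1 ≤ k) (hkn : k < n)
    (x : Metric.sphere (0 : EuclideanSpace ℝ (Fin (n + 1))) 1) :
    Nonempty (π_ k (Metric.sphere (0 : EuclideanSpace ℝ (Fin (n + 1))) 1) x) ∧
    Subsingleton (π_ k (Metric.sphere (0 : EuclideanSpace ℝ (Fin (n + 1))) 1) x) :=
  pi_k_sphere_subsingleton_general k n hkn x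
end
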